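/- Let s, t ∈ ℝ with 0 ≤ s ≤ 4, t ≥ −1, and s + t ≥ 2. Then for all P, Q ∈ Γ_n with r ≤ p_i/q_i ≤ R for all i: ((R+1)/(2R))^{s−3} (((4−s)R + s)/(4R^{t+2})) Φ_t(P||Q) ≤ ζ_s(Q||P) ≤ ((r+1)/(2r))^{s−3} (((4−s)r + s)/(4r^{t+2})) Φ_t(P||Q). -/

import Mathlib

open Real Finset

/-- Relative information of type `s` (generalized Kullback-Leibler divergence). -/
noncomputable def Phi (n : ℕ) (s : ℝ) (p q : Fin n → ℝ) : ℝ :=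
  if s = 0 then ∑ i, q i * Real.log (q i / p i)
  else if s = 1 then ∑ i, p i * Real.log (p i / q i)
  else (s * (s - 1))⁻¹ * ((∑ i, (p i) ^ s * (q i) ^ (1 - s)) - 1)

/-- Unified relative JS and AG divergence of type `s`. -/
noncomputable def Omega (n : ℕ) (s : ℝ) (p q : Fin n → ℝ) : ℝ :=
  if s = 0 then ∑ i, p i * Real.log (2 * p i / (p i + q i))
  else if s = 1 then ∑ i, ((p i + q i) / 2) * Real.log ((p i + q i) / (2 * p i))
  else (s * (s - 1))⁻¹ * ((∑ i, p i * ((p i + q i) / (2 * p i)) ^ s) - 1)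

/-- Relative J-divergence of type `s`. -/
noncomputable def zeta (n : ℕ) (s : ℝ) (p q : Fin n → ℝ) : ℝ :=
  if s = 1 then ∑ i, (p i - q i) * Real.log ((p i + q i) / (2 * q i))
  else (s - 1)⁻¹ * ∑ i, (p i - q i) * ((p i + q i) / (2 * q i)) ^ (s - 1)

/-!
Both divergences are Csiszár divergences `∑ i, q i * f (p i / q i)`: `ζ_s(Q‖P)` with generator
`G_s(x) = (1 - x) ((1 + x) / (2x))^(s-1) / (s - 1)` and `Φ_t(P‖Q)` with generator
`F_t(x) = (x^t - 1) / (t (t - 1))` (logarithmic limits at `s = 1` and `t = 0, 1`). Adding a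
multiple of `x - 1` does not change the divergence, so we may assume `f 1 = f' 1 = 0`.

The ratio of second derivatives is `G_s'' / F_t'' = η` with
`η(x) = ((x + 1) / (2x))^(s-3) ((4 - s) x + s) / (4 x^(t+2))` (`zetaPhiRatio`). Under
`0 ≤ s ≤ 4`, `t ≥ -1`, `s + t ≥ 2` the derivative of `log η` is a rational function whose
numerator is a quadratic in `x` with nonpositive coefficients, so `η` is decreasing. On
`[r, R] ∋ 1` the functions `G_s - η(R) F_t` and `η(r) F_t - G_s` are therefore convex with a
critical point at `1`, hence nonnegative, and summing against `q` gives both bounds.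
-/

open Set

lemma ConvexOn.isMinOn_of_hasDerivAt_zero {S : Set ℝ} {f : ℝ → ℝ} {c : ℝ}
    (hf : ConvexOn ℝ S f) (hc : c ∈ S) (hf' : HasDerivAt f 0 c) : IsMinOn f S c := by
  intro x hx
  show f c ≤ f x
  rcases lt_trichotomy c x with hcx | rfl | hxc
  · exact (slope_nonneg_iff_of_le hcx.le).1 (hf.le_slope_of_hasDerivAt hc hx hcx hf')
  · exact le_rfl
  · exact (slope_nonpos_iff_of_le hxc.le).1 (hf.slope_le_of_hasDerivAt hx hc hxc hf')

lemma le_of_hasDerivAt2_le {S : Set ℝ} (hS : Convex ℝ S) {f f' f'' g g' g'' : ℝ → ℝ}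
    {c x : ℝ} (hc : c ∈ S) (hx : x ∈ S)
    (hf : ∀ y ∈ S, HasDerivAt f (f' y) y) (hf' : ∀ y ∈ S, HasDerivAt f' (f'' y) y)
    (hg : ∀ y ∈ S, HasDerivAt g (g' y) y) (hg' : ∀ y ∈ S, HasDerivAt g' (g'' y) y)
    (h0 : f c = g c) (h1 : f' c = g' c) (h2 : ∀ y ∈ S, f'' y ≤ g'' y) : f x ≤ g x := by
  have hd : ∀ y ∈ S, HasDerivAt (fun z => g z - f z) (g' y - f' y) y :=
    fun y hy => (hg y hy).sub (hf y hy)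
  have hd' : ∀ y ∈ S, HasDerivAt (fun z => g' z - f' z) (g'' y - f'' y) y :=
    fun y hy => (hg' y hy).sub (hf' y hy)
  have hconv : ConvexOn ℝ S (fun z => g z - f z) :=
    convexOn_of_hasDerivWithinAt2_nonneg hS
      (fun y hy => (hd y hy).continuousAt.continuousWithinAt)
      (fun y hy => (hd y (interior_subset hy)).hasDerivWithinAt)
      (fun y hy => (hd' y (interior_subset hy)).hasDerivWithinAt)
      (fun y hy => sub_nonneg.2 (h2 y (interior_subset hy)))
  have hmin := hconv.isMinOn_of_hasDerivAt_zero hc (by simpa [h1] using hd c hc) hx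
  have : g c - f c ≤ g x - f x := hmin
  linarith

section Csiszar

variable {ι : Type*} [Fintype ι]

noncomputable def csiszar (f : ℝ → ℝ) (p q : ι → ℝ) : ℝ := ∑ i, q i * f (p i / q i)

lemma csiszar_const_mul (c : ℝ) (f : ℝ → ℝ) (p q : ι → ℝ) :
    csiszar (fun x => c * f x) p q = c * csiszar f p q := by
  simp only [csiszar, Finset.mul_sum]
  exact Finset.sum_congr rfl fun i _ => by ring

lemma csiszar_mono {f g : ℝ → ℝ} {p q : ι → ℝ} (hq : ∀ i, 0 ≤ q i)
    (hfg : ∀ i, f (p i / q i) ≤ g (p i / q i)) : csiszar f p q ≤ csiszar g p q :=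
  Finset.sum_le_sum fun i _ => mul_le_mul_of_nonneg_left (hfg i) (hq i)

lemma sum_mul_div_sub_one {p q : ι → ℝ} (hq : ∀ i, q i ≠ 0) (hpq : ∑ i, p i = ∑ i, q i) :
    ∑ i, q i * (p i / q i - 1) = 0 := by
  simp only [mul_sub, mul_div_cancel₀ _ (hq _), mul_one, Finset.sum_sub_distrib, hpq, sub_self]

lemma one_mem_Icc_of_forall_div_mem {p q : ι → ℝ} {r R : ℝ}
    (hq : ∀ i, 0 < q i) (hpq : ∑ i, p i = ∑ i, q i) (hq0 : 0 < ∑ i, q i)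
    (h : ∀ i, p i / q i ∈ Icc r R) : (1 : ℝ) ∈ Icc r R := by
  have hmean : ∑ i, q i * (p i / q i) = ∑ i, q i := by
    simp only [mul_div_cancel₀ _ (hq _).ne', hpq]
  have hlo : ∑ i, q i * r ≤ ∑ i, q i * (p i / q i) :=
    Finset.sum_le_sum fun i _ => mul_le_mul_of_nonneg_left (h i).1 (hq i).le
  have hhi : ∑ i, q i * (p i / q i) ≤ ∑ i, q i * R :=
    Finset.sum_le_sum fun i _ => mul_le_mul_of_nonneg_left (h i).2 (hq i).le
  rw [hmean, ← Finset.sum_mul] at hlo hhi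
  exact ⟨(mul_le_iff_le_one_right hq0).1 hlo, (le_mul_iff_one_le_right hq0).1 hhi⟩

end Csiszar

noncomputable def phiGen (t x : ℝ) : ℝ :=
  if t = 0 then -log x + (x - 1)
  else if t = 1 then x * log x - (x - 1)
  else (t * (t - 1))⁻¹ * (x ^ t - 1 - t * (x - 1))

noncomputable def phiGenDeriv (t x : ℝ) : ℝ :=
  if t = 0 then 1 - x⁻¹
  else if t = 1 then log x
  else (t - 1)⁻¹ * (x ^ (t - 1) - 1)

lemma hasDerivAt_phiGen (t : ℝ) {x : ℝ} (hx : 0 < x) :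
    HasDerivAt (phiGen t) (phiGenDeriv t x) x := by
  have hlog := hasDerivAt_log hx.ne'
  have hid := hasDerivAt_id' x
  unfold phiGen phiGenDeriv
  split_ifs with ht0 ht1
  · exact (hlog.neg.add (hid.sub_const 1)).congr_deriv (by ring)
  · exact ((hid.mul hlog).sub (hid.sub_const 1)).congr_deriv (by field_simp; ring)
  · have hpow := hasDerivAt_rpow_const (p := t) (Or.inl hx.ne')
    refine (((hpow.sub_const 1).sub ((hid.sub_const 1).const_mul t)).const_mul
      (t * (t - 1))⁻¹).congr_deriv ?_
    field_simp [sub_ne_zero.2 ht1]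

lemma hasDerivAt_phiGenDeriv (t : ℝ) {x : ℝ} (hx : 0 < x) :
    HasDerivAt (phiGenDeriv t) (x ^ (t - 2)) x := by
  unfold phiGenDeriv
  split_ifs with ht0 ht1
  · refine ((hasDerivAt_inv hx.ne').const_sub 1).congr_deriv ?_
    rw [ht0, zero_sub, rpow_neg hx.le, rpow_two, neg_neg]
  · refine (hasDerivAt_log hx.ne').congr_deriv ?_
    rw [ht1, show (1 : ℝ) - 2 = -1 by norm_num, rpow_neg_one]
  · refine (((hasDerivAt_rpow_const (p := t - 1) (Or.inl hx.ne')).sub_const 1).const_mul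
      (t - 1)⁻¹).congr_deriv ?_
    rw [sub_sub, one_add_one_eq_two, ← mul_assoc, inv_mul_cancel₀ (sub_ne_zero.2 ht1), one_mul]

lemma phiGen_one (t : ℝ) : phiGen t 1 = 0 := by
  simp [phiGen]

lemma phiGenDeriv_one (t : ℝ) : phiGenDeriv t 1 = 0 := by
  simp [phiGenDeriv]

lemma hasDerivAt_log_halfRatio {x : ℝ} (hx : 0 < x) :
    HasDerivAt (fun y => log ((1 + y) / (2 * y))) (-(x * (1 + x))⁻¹) x := by
  have h := (((hasDerivAt_id' x).const_add 1).fun_div ((hasDerivAt_id' x).const_mul 2)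
    (by positivity)).log (by positivity)
  refine h.congr_deriv ?_
  field_simp
  ring

lemma hasDerivAt_halfRatio_rpow (a : ℝ) {x : ℝ} (hx : 0 < x) :
    HasDerivAt (fun y => ((1 + y) / (2 * y)) ^ a)
      (-(a * ((1 + x) / (2 * x)) ^ (a - 1) / (2 * x ^ 2))) x := by
  have h := (((hasDerivAt_id' x).const_add 1).fun_div ((hasDerivAt_id' x).const_mul 2)
    (by positivity)).rpow_const (p := a) (Or.inl (by positivity))
  refine h.congr_deriv ?_
  field_simp
  ring

noncomputable def zetaGen (s x : ℝ) : ℝ :=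
  if s = 1 then (1 - x) * log ((1 + x) / (2 * x))
  else (s - 1)⁻¹ * ((1 - x) * ((1 + x) / (2 * x)) ^ (s - 1) + (x - 1))

noncomputable def zetaGenDeriv (s x : ℝ) : ℝ :=
  if s = 1 then -log ((1 + x) / (2 * x)) - (1 - x) / (x * (1 + x))
  else (s - 1)⁻¹ * (1 - ((1 + x) / (2 * x)) ^ (s - 1)) -
    (1 - x) * ((1 + x) / (2 * x)) ^ (s - 2) / (2 * x ^ 2)

lemma hasDerivAt_zetaGen (s : ℝ) {x : ℝ} (hx : 0 < x) :
    HasDerivAt (zetaGen s) (zetaGenDeriv s x) x := by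
  have hid := hasDerivAt_id' x
  unfold zetaGen zetaGenDeriv
  split_ifs with hs
  · refine ((hid.const_sub 1).fun_mul (hasDerivAt_log_halfRatio hx)).congr_deriv ?_
    field_simp
    ring
  · refine ((((hid.const_sub 1).fun_mul (hasDerivAt_halfRatio_rpow (s - 1) hx)).add
      (hid.sub_const 1)).const_mul (s - 1)⁻¹).congr_deriv ?_
    rw [sub_sub, one_add_one_eq_two]
    field_simp [sub_ne_zero.2 hs]
    ring

lemma hasDerivAt_zetaGenDeriv (s : ℝ) {x : ℝ} (hx : 0 < x) :
    HasDerivAt (zetaGenDeriv s)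
      (((1 + x) / (2 * x)) ^ (s - 3) * ((4 - s) * x + s) / (4 * x ^ 4)) x := by
  have hid := hasDerivAt_id' x
  have hw : 0 < (1 + x) / (2 * x) := by positivity
  unfold zetaGenDeriv
  split_ifs with hs
  · refine ((hasDerivAt_log_halfRatio hx).neg.sub ((hid.const_sub 1).fun_div
      (hid.fun_mul (hid.const_add 1)) (by positivity))).congr_deriv ?_
    rw [hs, show (1 : ℝ) - 3 = -2 by norm_num, rpow_neg hw.le, rpow_two]
    field_simp
    ring
  · refine ((((hasDerivAt_halfRatio_rpow (s - 1) hx).const_sub 1).const_mul (s - 1)⁻¹).sub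
      (((hid.const_sub 1).fun_mul (hasDerivAt_halfRatio_rpow (s - 2) hx)).fun_div
        ((hasDerivAt_pow 2 x).const_mul 2) (by positivity))).congr_deriv ?_
    rw [show s - 1 - 1 = s - 3 + 1 by ring, show s - 2 - 1 = s - 3 by ring,
      show s - 2 = s - 3 + 1 by ring, rpow_add_one hw.ne']
    field_simp [sub_ne_zero.2 hs]
    ring

lemma zetaGen_one (s : ℝ) : zetaGen s 1 = 0 := by
  simp [zetaGen]

lemma zetaGenDeriv_one (s : ℝ) : zetaGenDeriv s 1 = 0 := by
  simp [zetaGenDeriv]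

section Divergences

variable {n : ℕ} {p q : Fin n → ℝ}

lemma Phi_eq_csiszar (t : ℝ) (hp : ∀ i, 0 < p i) (hq : ∀ i, 0 < q i)
    (hp1 : ∑ i, p i = 1) (hq1 : ∑ i, q i = 1) : Phi n t p q = csiszar (phiGen t) p q := by
  have hlin := sum_mul_div_sub_one (fun i => (hq i).ne') (hp1.trans hq1.symm)
  unfold Phi csiszar phiGen
  split_ifs with ht0 ht1
  · have hterm : ∀ i, q i * (-log (p i / q i) + (p i / q i - 1)) =
        q i * log (q i / p i) + q i * (p i / q i - 1) := fun i => by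
      rw [← log_inv, inv_div]
      ring
    rw [Finset.sum_congr rfl fun i _ => hterm i, Finset.sum_add_distrib, hlin, add_zero]
  · have hterm : ∀ i, q i * (p i / q i * log (p i / q i) - (p i / q i - 1)) =
        p i * log (p i / q i) - q i * (p i / q i - 1) := fun i => by
      rw [mul_sub, ← mul_assoc, mul_div_cancel₀ _ (hq i).ne']
    rw [Finset.sum_congr rfl fun i _ => hterm i, Finset.sum_sub_distrib, hlin, sub_zero]
  · have hterm : ∀ i, q i * ((t * (t - 1))⁻¹ * ((p i / q i) ^ t - 1 - t * (p i / q i - 1))) =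
        (t * (t - 1))⁻¹ * (p i ^ t * q i ^ (1 - t) - q i) -
          (t - 1)⁻¹ * (q i * (p i / q i - 1)) := fun i => by
      rw [div_rpow (hp i).le (hq i).le, rpow_sub (hq i), rpow_one]
      have := rpow_pos_of_pos (hq i) t
      field_simp
    rw [Finset.sum_congr rfl fun i _ => hterm i, Finset.sum_sub_distrib, ← Finset.mul_sum,
      ← Finset.mul_sum, hlin, Finset.sum_sub_distrib, hq1]
    ring

lemma zeta_swap_eq_csiszar (s : ℝ) (hp : ∀ i, 0 < p i) (hq : ∀ i, 0 < q i)
    (hp1 : ∑ i, p i = 1) (hq1 : ∑ i, q i = 1) : zeta n s q p = csiszar (zetaGen s) p q := by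
  have hlin := sum_mul_div_sub_one (fun i => (hq i).ne') (hp1.trans hq1.symm)
  have hw : ∀ i, (1 + p i / q i) / (2 * (p i / q i)) = (q i + p i) / (2 * p i) := fun i => by
    field_simp [(hp i).ne', (hq i).ne']
  unfold zeta csiszar zetaGen
  split_ifs with hs
  · refine Finset.sum_congr rfl fun i _ => ?_
    rw [hw]
    field_simp [(hq i).ne']
  · have hterm : ∀ i, q i * ((s - 1)⁻¹ * ((1 - p i / q i) *
        ((1 + p i / q i) / (2 * (p i / q i))) ^ (s - 1) + (p i / q i - 1))) =
        (s - 1)⁻¹ * ((q i - p i) * ((q i + p i) / (2 * p i)) ^ (s - 1)) +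
          (s - 1)⁻¹ * (q i * (p i / q i - 1)) := fun i => by
      rw [hw]
      field_simp [(hq i).ne']
    rw [Finset.sum_congr rfl fun i _ => hterm i, Finset.sum_add_distrib, ← Finset.mul_sum,
      ← Finset.mul_sum, hlin, mul_zero, add_zero]

end Divergences

noncomputable def zetaPhiRatio (s t x : ℝ) : ℝ :=
  ((x + 1) / (2 * x)) ^ (s - 3) * (((4 - s) * x + s) / (4 * x ^ (t + 2)))

section Ratio

variable {s t : ℝ}

lemma four_sub_mul_add_pos (hs0 : 0 ≤ s) (hs4 : s ≤ 4) {x : ℝ} (hx : 0 < x) : 0 < (4 - s) * x + s := by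
  rcases hs0.lt_or_eq with hs | rfl
  · nlinarith
  · linarith

lemma zetaPhiRatio_pos (hs0 : 0 ≤ s) (hs4 : s ≤ 4) {x : ℝ} (hx : 0 < x) :
    0 < zetaPhiRatio s t x := by
  have := four_sub_mul_add_pos hs0 hs4 hx
  unfold zetaPhiRatio
  positivity

lemma zetaPhiRatio_mul_rpow (s t : ℝ) {x : ℝ} (hx : 0 < x) :
    zetaPhiRatio s t x * x ^ (t - 2) =
      ((1 + x) / (2 * x)) ^ (s - 3) * ((4 - s) * x + s) / (4 * x ^ 4) := by
  rw [zetaPhiRatio, add_comm x 1, show t + 2 = t - 2 + 4 by ring,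
    rpow_add hx, rpow_ofNat]
  have := rpow_pos_of_pos hx (t - 2)
  field_simp

lemma log_zetaPhiRatio (hs0 : 0 ≤ s) (hs4 : s ≤ 4) {x : ℝ} (hx : 0 < x) :
    log (zetaPhiRatio s t x) = (s - 3) * log ((1 + x) / (2 * x)) +
      log ((4 - s) * x + s) - log 4 - (t + 2) * log x := by
  have := four_sub_mul_add_pos hs0 hs4 hx
  rw [zetaPhiRatio, add_comm x 1, log_mul (by positivity) (by positivity),
    log_rpow (by positivity), log_div this.ne' (by positivity),
    log_mul (by norm_num) (by positivity), log_rpow hx]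
  ring

lemma deriv_log_zetaPhiRatio_nonpos (hs0 : 0 ≤ s) (hs4 : s ≤ 4) (ht : -1 ≤ t)
    (hst : 2 ≤ s + t) {x : ℝ} (hx : 0 < x) :
    (s - 3) * -(x * (1 + x))⁻¹ + (4 - s) / ((4 - s) * x + s) - (t + 2) / x ≤ 0 := by
  have hlin := four_sub_mul_add_pos hs0 hs4 hx
  have hnum : -(4 - s) * (t + 1) * x ^ 2 + ((4 - s) ^ 2 - 4 * (t + 2)) * x +
      s * (1 - s - t) ≤ 0 := by
    have h2 : 0 ≤ (4 - s) * (t + 1) * x ^ 2 := by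
      have : 0 ≤ 4 - s := by linarith
      have : 0 ≤ t + 1 := by linarith
      positivity
    have h1 : ((4 - s) ^ 2 - 4 * (t + 2)) * x ≤ 0 :=
      mul_nonpos_of_nonpos_of_nonneg (by nlinarith) hx.le
    have h0 : s * (1 - s - t) ≤ 0 := mul_nonpos_of_nonneg_of_nonpos hs0 (by linarith)
    linarith
  have key : (s - 3) * -(x * (1 + x))⁻¹ + (4 - s) / ((4 - s) * x + s) - (t + 2) / x =
      (-(4 - s) * (t + 1) * x ^ 2 + ((4 - s) ^ 2 - 4 * (t + 2)) * x + s * (1 - s - t)) /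
        (x * (1 + x) * ((4 - s) * x + s)) := by
    generalize hL : (4 - s) * x + s = L at hlin
    have := hlin.ne'
    field_simp
    subst hL
    ring
  rw [key]
  exact div_nonpos_of_nonpos_of_nonneg hnum (by positivity)

lemma hasDerivAt_log_zetaPhiRatio (hs0 : 0 ≤ s) (hs4 : s ≤ 4) {x : ℝ} (hx : 0 < x) :
    HasDerivAt (fun y => log (zetaPhiRatio s t y))
      ((s - 3) * -(x * (1 + x))⁻¹ + (4 - s) / ((4 - s) * x + s) - (t + 2) / x) x := by
  have hlin := ((hasDerivAt_id' x).const_mul (4 - s)).add_const s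
  have h := ((((hasDerivAt_log_halfRatio hx).const_mul (s - 3)).add
    (hlin.log (four_sub_mul_add_pos hs0 hs4 hx).ne')).sub_const (log 4)).sub
    ((hasDerivAt_log hx.ne').const_mul (t + 2))
  refine (h.congr_deriv (by field_simp)).congr_of_eventuallyEq ?_
  exact Filter.eventually_of_mem (Ioi_mem_nhds hx) fun y hy => log_zetaPhiRatio hs0 hs4 hy

lemma antitoneOn_zetaPhiRatio (hs0 : 0 ≤ s) (hs4 : s ≤ 4) (ht : -1 ≤ t) (hst : 2 ≤ s + t) :
    AntitoneOn (zetaPhiRatio s t) (Ioi 0) := by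
  have hd := fun x (hx : x ∈ Ioi (0 : ℝ)) => hasDerivAt_log_zetaPhiRatio (t := t) hs0 hs4 hx
  have hlog : AntitoneOn (fun y => log (zetaPhiRatio s t y)) (Ioi 0) := by
    refine antitoneOn_of_deriv_nonpos (convex_Ioi 0)
      (fun x hx => (hd x hx).continuousAt.continuousWithinAt)
      (fun x hx => (hd x (interior_subset hx)).differentiableAt.differentiableWithinAt)
      fun x hx => ?_
    rw [interior_Ioi] at hx
    rw [(hd x hx).deriv]
    exact deriv_log_zetaPhiRatio_nonpos hs0 hs4 ht hst hx
  intro x hx y hy hxy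
  rw [← log_le_log_iff (zetaPhiRatio_pos hs0 hs4 hy) (zetaPhiRatio_pos hs0 hs4 hx)]
  exact hlog hx hy hxy

end Ratio

section Pointwise

variable {s t r R : ℝ}

lemma zetaGen_bounded_by_phiGen (hs0 : 0 ≤ s) (hs4 : s ≤ 4) (ht : -1 ≤ t) (hst : 2 ≤ s + t)
    (hr : 0 < r) (h1 : 1 ∈ Icc r R) {x : ℝ} (hx : x ∈ Icc r R) :
    zetaPhiRatio s t R * phiGen t x ≤ zetaGen s x ∧
      zetaGen s x ≤ zetaPhiRatio s t r * phiGen t x := by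
  have hpos : ∀ y ∈ Icc r R, 0 < y := fun y hy => hr.trans_le hy.1
  have hanti := antitoneOn_zetaPhiRatio (t := t) hs0 hs4 ht hst
  have hG := fun y hy => hasDerivAt_zetaGen s (hpos y hy)
  have hG' := fun y hy => hasDerivAt_zetaGenDeriv s (hpos y hy)
  have hF := fun (c y : ℝ) hy => (hasDerivAt_phiGen t (hpos y hy)).const_mul c
  have hF' := fun (c y : ℝ) hy => (hasDerivAt_phiGenDeriv t (hpos y hy)).const_mul c
  have hG'' : ∀ y ∈ Icc r R, ((1 + y) / (2 * y)) ^ (s - 3) * ((4 - s) * y + s) / (4 * y ^ 4) =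
      zetaPhiRatio s t y * y ^ (t - 2) := fun y hy => (zetaPhiRatio_mul_rpow s t (hpos y hy)).symm
  have hRy : ∀ y ∈ Icc r R, zetaPhiRatio s t R ≤ zetaPhiRatio s t y := fun y hy =>
    hanti (hpos y hy) (hpos R ⟨hy.1.trans hy.2, le_rfl⟩) hy.2
  have hyr : ∀ y ∈ Icc r R, zetaPhiRatio s t y ≤ zetaPhiRatio s t r := fun y hy =>
    hanti hr (hpos y hy) hy.1
  constructor
  · refine le_of_hasDerivAt2_le (convex_Icc r R) h1 hx (hF _) (hF' _) hG hG'
      (by simp [phiGen_one, zetaGen_one]) (by simp [phiGenDeriv_one, zetaGenDeriv_one])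
      fun y hy => ?_
    rw [hG'' y hy]
    exact mul_le_mul_of_nonneg_right (hRy y hy) (rpow_nonneg (hpos y hy).le _)
  · refine le_of_hasDerivAt2_le (convex_Icc r R) h1 hx hG hG' (hF _) (hF' _)
      (by simp [phiGen_one, zetaGen_one]) (by simp [phiGenDeriv_one, zetaGenDeriv_one])
      fun y hy => ?_
    rw [hG'' y hy]
    exact mul_le_mul_of_nonneg_right (hyr y hy) (rpow_nonneg (hpos y hy).le _)

end Pointwise

theorem stmt_10_general (s t : ℝ) (hs0 : 0 ≤ s) (hs4 : s ≤ 4) (ht : -1 ≤ t) (hst : 2 ≤ s + t)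
    (n : ℕ) (p q : Fin n → ℝ)
    (hp : ∀ i, 0 < p i) (hq : ∀ i, 0 < q i)
    (hp1 : ∑ i, p i = 1) (hq1 : ∑ i, q i = 1)
    (r R : ℝ) (hr : 0 < r)
    (hbound : ∀ i, r ≤ p i / q i ∧ p i / q i ≤ R) :
    ((R + 1) / (2 * R)) ^ (s - 3) * (((4 - s) * R + s) / (4 * R ^ (t + 2))) * Phi n t p q ≤ zeta n s q p ∧
      zeta n s q p ≤ ((r + 1) / (2 * r)) ^ (s - 3) * (((4 - s) * r + s) / (4 * r ^ (t + 2))) * Phi n t p q := by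
  have h1 : (1 : ℝ) ∈ Icc r R :=
    one_mem_Icc_of_forall_div_mem hq (hp1.trans hq1.symm) (by rw [hq1]; exact one_pos) hbound
  have hpt := fun i => zetaGen_bounded_by_phiGen hs0 hs4 ht hst hr h1 (hbound i)
  change zetaPhiRatio s t R * _ ≤ _ ∧ _ ≤ zetaPhiRatio s t r * _
  rw [zeta_swap_eq_csiszar s hp hq hp1 hq1, Phi_eq_csiszar t hp hq hp1 hq1,
    ← csiszar_const_mul, ← csiszar_const_mul]
  exact ⟨csiszar_mono (fun i => (hq i).le) fun i => (hpt i).1,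
    csiszar_mono (fun i => (hq i).le) fun i => (hpt i).2⟩

theorem stmt_10 (s t : ℝ) (hs0 : 0 ≤ s) (hs4 : s ≤ 4) (ht : -1 ≤ t) (hst : 2 ≤ s + t)
    (n : ℕ) (hn : 2 ≤ n) (p q : Fin n → ℝ)
    (hp : ∀ i, 0 < p i) (hq : ∀ i, 0 < q i)
    (hp1 : ∑ i, p i = 1) (hq1 : ∑ i, q i = 1)
    (r R : ℝ) (hr : 0 < r) (hrR : r ≤ R)
    (hbound : ∀ i, r ≤ p i / q i ∧ p i / q i ≤ R) :
    ((R + 1) / (2 * R)) ^ (s - 3) * (((4 - s) * R + s) / (4 * R ^ (t + 2))) * Phi n t p q ≤ zeta n s q p ∧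
      zeta n s q p ≤ ((r + 1) / (2 * r)) ^ (s - 3) * (((4 - s) * r + s) / (4 * r ^ (t + 2))) * Phi n t p q :=
  stmt_10_general s t hs0 hs4 ht hst n p q hp hq hp1 hq1 r R hr hbound
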